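/- Let A(z) = D(z) + Π(z)·A where D(z) = diag(z^{t₁},…,z^{t_ℓ}), Π(z) = diag(π_{t₁}(z),…,π_{t_ℓ}(z)) with π_ν(z) = (z^{ν-1},…,z,1), H the block-diagonal observer-form output matrix, J the block shift matrix, and F = J - A·H. Then H·(zI - F)⁻¹ = A(z)⁻¹·Π(z) for all z where both sides are defined. -/
import Mathlib


/-- Observer canonical form identity `H (zI - F)⁻¹ = A(z)⁻¹ Π(z)`.
The block index set is `(i : Fin l) × Fin (t i)`, where `t` are the
observability indices with `∑ tᵢ = n·l`. -/
theorem stmt_19 (l n : ℕ) (t : Fin l → ℕ) (hpos : ∀ i, 0 < t i)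
    (hsum : ∑ i, t i = n * l)
    (H : Matrix (Fin l) ((i : Fin l) × Fin (t i)) ℂ)
    (hH : ∀ (i : Fin l) (j : (i' : Fin l) × Fin (t i')),
      H i j = if i = j.1 ∧ (j.2 : ℕ) = 0 then 1 else 0)
    (J : Matrix ((i : Fin l) × Fin (t i)) ((i : Fin l) × Fin (t i)) ℂ)
    (hJ : ∀ p q : (i : Fin l) × Fin (t i),
      J p q = if p.1 = q.1 ∧ (q.2 : ℕ) = (p.2 : ℕ) + 1 then 1 else 0)
    (A : Matrix ((i : Fin l) × Fin (t i)) (Fin l) ℂ)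
    (F : Matrix ((i : Fin l) × Fin (t i)) ((i : Fin l) × Fin (t i)) ℂ)
    (hF : F = J - A * H)
    (Pi : ℂ → Matrix (Fin l) ((i : Fin l) × Fin (t i)) ℂ)
    (hPi : ∀ (z : ℂ) (i : Fin l) (j : (i' : Fin l) × Fin (t i')),
      Pi z i j = if i = j.1 then z ^ (t j.1 - 1 - (j.2 : ℕ)) else 0)
    (D : ℂ → Matrix (Fin l) (Fin l) ℂ)
    (hD : ∀ z : ℂ, D z = Matrix.diagonal fun i => z ^ t i)
    (Az : ℂ → Matrix (Fin l) (Fin l) ℂ)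
    (hAz : ∀ z : ℂ, Az z = D z + Pi z * A) :
    ∀ z : ℂ, IsUnit (z • (1 : Matrix ((i : Fin l) × Fin (t i)) ((i : Fin l) × Fin (t i)) ℂ) - F) →
      IsUnit (Az z) →
      H * (z • (1 : Matrix ((i : Fin l) × Fin (t i)) ((i : Fin l) × Fin (t i)) ℂ) - F)⁻¹
        = (Az z)⁻¹ * Pi z := by
  intro z hFu hAzu
  set M : Matrix ((i : Fin l) × Fin (t i)) ((i : Fin l) × Fin (t i)) ℂ :=
    z • (1 : Matrix ((i : Fin l) × Fin (t i)) ((i : Fin l) × Fin (t i)) ℂ) - F with hM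
  -- key identity:  Pi z * (z•1 - J) = D z * H
  have key : Pi z * (z • (1 : Matrix ((i : Fin l) × Fin (t i)) ((i : Fin l) × Fin (t i)) ℂ) - J)
      = D z * H := by
    ext i q
    rw [Matrix.mul_apply, Matrix.mul_apply]
    have hsub : ∀ p, (z • (1 : Matrix ((i : Fin l) × Fin (t i)) ((i : Fin l) × Fin (t i)) ℂ) - J) p q
        = z * (if p = q then 1 else 0) - J p q := by
      intro p
      simp [Matrix.sub_apply, Matrix.smul_apply, Matrix.one_apply]
    simp only [hsub, mul_sub]
    rw [Finset.sum_sub_distrib]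
    have h1 : (∑ p, Pi z i p * (z * (if p = q then 1 else 0))) = Pi z i q * z := by
      rw [Finset.sum_eq_single q]
      · simp
      · intro b _ hb; simp [hb]
      · simp
    rw [h1]
    have hRHS : (∑ k, D z i k * H k q) = z ^ t i * H i q := by
      rw [Finset.sum_eq_single i]
      · simp [hD, Matrix.diagonal]
      · intro b _ hb; simp [hD, Matrix.diagonal, hb.symm]
      · simp
    rw [hRHS]
    by_cases hq0 : (q.2 : ℕ) = 0
    · have h2 : (∑ p, Pi z i p * J p q) = 0 := by
        apply Finset.sum_eq_zero
        intro p _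
        have : J p q = 0 := by rw [hJ]; simp [hq0]
        simp [this]
      rw [h2, sub_zero, hPi, hH]
      split_ifs with h ha ha
      · subst h
        rw [mul_one, hq0, Nat.sub_zero, ← pow_succ]
        congr 1
        have := hpos q.1
        omega
      · exact absurd ⟨h, hq0⟩ ha
      · exact absurd ha.1 h
      · simp
    · -- q.2 ≥ 1 : RHS is 0
      have hq1 : 1 ≤ (q.2 : ℕ) := Nat.one_le_iff_ne_zero.mpr hq0
      have hqlt : (q.2 : ℕ) < t q.1 := q.2.isLt
      have hH0 : H i q = 0 := by rw [hH]; simp [hq0]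
      rw [hH0, mul_zero]
      set p0 : (i' : Fin l) × Fin (t i') := ⟨q.1, ⟨(q.2 : ℕ) - 1, by omega⟩⟩ with hp0
      have h2 : (∑ p, Pi z i p * J p q) = Pi z i p0 * J p0 q := by
        apply Finset.sum_eq_single p0
        · intro b _ hb
          rcases b with ⟨b1, b2⟩
          have hJ0 : J ⟨b1, b2⟩ q = 0 := by
            rw [hJ]
            rw [if_neg]
            rintro ⟨h1c, h2c⟩
            apply hb
            dsimp at h1c h2c
            subst h1c
            rw [hp0]
            exact congrArg (Sigma.mk q.1)
              (Fin.ext (show (b2 : ℕ) = (q.2 : ℕ) - 1 by omega))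
          rw [hJ0, mul_zero]
        · intro h; exact absurd (Finset.mem_univ p0) h
      rw [h2]
      have hJp0 : J p0 q = 1 := by
        rw [hJ]
        have hc : p0.1 = q.1 ∧ (q.2 : ℕ) = (p0.2 : ℕ) + 1 :=
          ⟨rfl, by show (q.2 : ℕ) = ((q.2 : ℕ) - 1) + 1; omega⟩
        rw [if_pos hc]
      rw [hJp0, mul_one, hPi, hPi, hp0]
      split_ifs with h
      · have e1 : t q.1 - 1 - (((⟨(q.2 : ℕ) - 1, by omega⟩ : Fin (t q.1)) : Fin (t q.1)) : ℕ)
            = (t q.1 - 1 - (q.2 : ℕ)) + 1 := by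
          show t q.1 - 1 - ((q.2 : ℕ) - 1) = (t q.1 - 1 - (q.2 : ℕ)) + 1
          omega
        rw [e1, pow_succ]
        ring
      · simp
  -- main identity:  Az z * H = Pi z * M
  have hsplit : z • (1 : Matrix ((i : Fin l) × Fin (t i)) ((i : Fin l) × Fin (t i)) ℂ)
      - (J - A * H)
      = (z • (1 : Matrix ((i : Fin l) × Fin (t i)) ((i : Fin l) × Fin (t i)) ℂ) - J) + A * H := by
    abel
  have main : Az z * H = Pi z * M := by
    rw [hM, hF, hAz z, Matrix.add_mul, hsplit, Matrix.mul_add, key, Matrix.mul_assoc]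
  have hdetA : IsUnit (Az z).det := (Matrix.isUnit_iff_isUnit_det _).mp hAzu
  have hdetM : IsUnit M.det := (Matrix.isUnit_iff_isUnit_det _).mp hFu
  calc H * M⁻¹ = (Az z)⁻¹ * (Az z * H) * M⁻¹ := by
        rw [← Matrix.mul_assoc, Matrix.nonsing_inv_mul _ hdetA, Matrix.one_mul]
    _ = (Az z)⁻¹ * (Pi z * M) * M⁻¹ := by rw [main]
    _ = (Az z)⁻¹ * Pi z := by
        rw [Matrix.mul_assoc, Matrix.mul_assoc, Matrix.mul_nonsing_inv _ hdetM, Matrix.mul_one]
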